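/- arXiv:2111.08638 — 4 statements merged into one kernel-verified Lean document; each statement's English description precedes it below -/
import Mathlib

section
/- Let n ≥ 1, let ν ≥ 4 be a real number, let r₀ > 0, and let H : [r₀, ∞) → Mₙ(ℝ) be continuous with H(r) = O(r^{−ν}) as r → ∞. Then every twice differentiable Y : [r₀, ∞) → Mₙ(ℝ) satisfying the second-order linear equation Y''(r) = −H(r)·Y(r) for all r ≥ r₀ has the following asymptotic form: there exist constant matrices F, E ∈ Mₙ(ℝ) such that Y'(r) = F + O(r^{−ν+2}) and Y(r) = r·F + E + O(r^{−ν+3}) as r → ∞. -/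
open Filter Asymptotics Set

attribute [local instance] Matrix.normedAddCommGroup Matrix.normedSpace

instance sachs_aux_cenorm (n : ℕ) : ContinuousENorm (Matrix (Fin n) (Fin n) ℝ) :=
  NormedAddCommGroup.toENormedAddCommMonoid.toContinuousENorm

instance sachs_aux_pms (n : ℕ) : TopologicalSpace.PseudoMetrizableSpace (Matrix (Fin n) (Fin n) ℝ) :=
  inferInstanceAs (TopologicalSpace.PseudoMetrizableSpace (Fin n → Fin n → ℝ))

theorem sachs_aux_norm_mul_le (n : ℕ) (A B : Matrix (Fin n) (Fin n) ℝ) :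
    ‖A * B‖ ≤ n * ‖A‖ * ‖B‖ := by
  rcases Nat.eq_zero_or_pos n with h | h
  · subst h; exact (Matrix.norm_le_iff (by positivity)).2 fun i j => i.elim0
  refine (Matrix.norm_le_iff (by positivity)).2 fun i j => ?_
  calc ‖(A * B) i j‖ = ‖∑ k, A i k * B k j‖ := by rw [Matrix.mul_apply]
    _ ≤ ∑ k : Fin n, ‖A i k * B k j‖ := norm_sum_le _ _
    _ ≤ ∑ k : Fin n, ‖A‖ * ‖B‖ := by
        refine Finset.sum_le_sum fun k _ => ?_
        calc ‖A i k * B k j‖ ≤ ‖A i k‖ * ‖B k j‖ := norm_mul_le _ _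
          _ ≤ ‖A‖ * ‖B‖ := mul_le_mul (Matrix.norm_entry_le_entrywise_sup_norm A)
              (Matrix.norm_entry_le_entrywise_sup_norm B) (norm_nonneg _) (norm_nonneg _)
    _ = n * ‖A‖ * ‖B‖ := by simp [Finset.sum_const, mul_assoc]

set_option maxHeartbeats 2000000 in
/-- Asymptotics for the matrix equation `Y'' = -H·Y` coming from the Sachs equation:
if `H = O(r^(-ν))` with `ν ≥ 4`, then there are constant matrices `F, E` with
`Y' = F + O(r^(-ν+2))` and `Y = r·F + E + O(r^(-ν+3))` as `r → ∞`.
Here `Y'` denotes the first and `Y''` the second derivative of `Y`. -/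
theorem sachs_second_order_asymptotics
    (n : ℕ) (hn : 1 ≤ n)
    (ν : ℝ) (hν : 4 ≤ ν)
    (r₀ : ℝ) (hr₀ : 0 < r₀)
    (H : ℝ → Matrix (Fin n) (Fin n) ℝ)
    (hHcont : ContinuousOn H (Ici r₀))
    (hH : H =O[atTop] fun r : ℝ => r ^ (-ν))
    (Y Y' Y'' : ℝ → Matrix (Fin n) (Fin n) ℝ)
    (hY' : ∀ r ∈ Ici r₀, HasDerivWithinAt Y (Y' r) (Ici r₀) r)
    (hY'' : ∀ r ∈ Ici r₀, HasDerivWithinAt Y' (Y'' r) (Ici r₀) r)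
    (heq : ∀ r ∈ Ici r₀, Y'' r = -(H r * Y r)) :
    ∃ F E : Matrix (Fin n) (Fin n) ℝ,
      ((fun r => Y' r - F) =O[atTop] fun r : ℝ => r ^ (-ν + 2)) ∧
      ((fun r => Y r - (r • F + E)) =O[atTop] fun r : ℝ => r ^ (-ν + 3)) := by
  -- continuity facts
  have hYc : ContinuousOn Y (Ici r₀) := fun r hr => (hY' r hr).continuousWithinAt
  have hY'c : ContinuousOn Y' (Ici r₀) := fun r hr => (hY'' r hr).continuousWithinAt
  have hY''c : ContinuousOn Y'' (Ici r₀) :=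
    ((hHcont.mul hYc).neg).congr fun r hr => heq r hr
  -- fundamental theorem of calculus helper
  have ftc : ∀ (f g : ℝ → Matrix (Fin n) (Fin n) ℝ),
      (∀ r ∈ Ici r₀, HasDerivWithinAt f (g r) (Ici r₀) r) → ContinuousOn g (Ici r₀) →
      ∀ a b : ℝ, r₀ ≤ a → a ≤ b → f b = f a + ∫ s in a..b, g s := by
    intro f g hd hgc a b ha hab
    have hfc : ContinuousOn f (Ici r₀) := fun r hr => (hd r hr).continuousWithinAt
    have hsub : Icc a b ⊆ Ici r₀ := fun x hx => le_trans ha hx.1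
    have h1 : ∫ s in a..b, g s = f b - f a := by
      refine intervalIntegral.integral_eq_sub_of_hasDeriv_right_of_le hab
        (hfc.mono hsub) (fun x hx => (hd x (le_trans ha hx.1.le)).mono
          (fun y hy => le_trans (le_trans ha hx.1.le) (le_of_lt hy))) ?_
      refine ContinuousOn.intervalIntegrable ?_
      rw [uIcc_of_le hab]
      exact hgc.mono hsub
    rw [h1]; abel
  -- constants
  obtain ⟨c, hcb⟩ := hH.bound
  set C : ℝ := max c 0 with hCdef
  have hC : 0 ≤ C := le_max_right c 0
  set c1 : ℝ := n * C + 1 with hc1def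
  have hc1 : 0 < c1 := by positivity
  -- choose R
  have htail0 : Tendsto (fun x : ℝ => c1 * x ^ (2 - ν)) atTop (nhds 0) := by
    have h1 : Tendsto (fun x : ℝ => x ^ (-(ν - 2))) atTop (nhds 0) :=
      tendsto_rpow_neg_atTop (by linarith)
    have h2 : (fun x : ℝ => c1 * x ^ (2 - ν)) = fun x : ℝ => c1 * x ^ (-(ν - 2)) := by
      ext x; norm_num
    rw [h2]
    simpa using h1.const_mul c1
  obtain ⟨R₁, hR₁⟩ := eventually_atTop.1 hcb
  obtain ⟨R₂, hR₂⟩ := eventually_atTop.1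
    (htail0.eventually (eventually_le_nhds (show (0:ℝ) < (ν - 2)/2 by linarith)))
  set R : ℝ := max (max r₀ 1) (max R₁ R₂) with hRdef
  have hRr₀ : r₀ ≤ R := le_trans (le_max_left _ _) (le_max_left _ _)
  have hR1 : (1:ℝ) ≤ R := le_trans (le_max_right _ _) (le_max_left _ _)
  have hRpos : (0:ℝ) < R := lt_of_lt_of_le one_pos hR1
  have hsmall : c1 * R ^ (2 - ν) ≤ (ν - 2)/2 :=
    hR₂ R (le_trans (le_max_right _ _) (le_max_right _ _))
  have hHR : ∀ r, R ≤ r → ‖H r‖ ≤ C * r ^ (-ν) := by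
    intro r hr
    have h0 : (0:ℝ) < r := lt_of_lt_of_le hRpos hr
    have h1 := hR₁ r (le_trans (le_trans (le_max_left _ _) (le_max_right _ _)) hr)
    rw [Real.norm_of_nonneg (Real.rpow_nonneg h0.le _)] at h1
    calc ‖H r‖ ≤ c * r ^ (-ν) := h1
      _ ≤ C * r ^ (-ν) :=
        mul_le_mul_of_nonneg_right (le_max_left c 0) (Real.rpow_nonneg h0.le _)
  -- pointwise bound on Y''
  have hHY : ∀ r, R ≤ r → ‖Y'' r‖ ≤ c1 * r ^ (-ν) * ‖Y r‖ := by
    intro r hr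
    have h0 : (0:ℝ) < r := lt_of_lt_of_le hRpos hr
    have hx : (0:ℝ) ≤ r ^ (-ν) := Real.rpow_nonneg h0.le _
    rw [heq r (le_trans hRr₀ hr), norm_neg]
    calc ‖H r * Y r‖ ≤ n * ‖H r‖ * ‖Y r‖ := sachs_aux_norm_mul_le n _ _
      _ ≤ n * (C * r ^ (-ν)) * ‖Y r‖ := by
          have h2 := hHR r hr
          have hn0 : (0:ℝ) ≤ n := Nat.cast_nonneg n
          exact mul_le_mul_of_nonneg_right (mul_le_mul_of_nonneg_left h2 hn0) (norm_nonneg _)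
      _ ≤ c1 * r ^ (-ν) * ‖Y r‖ := by
          have h3 : (n:ℝ) * (C * r ^ (-ν)) ≤ c1 * r ^ (-ν) := by
            rw [hc1def]; nlinarith [hx]
          exact mul_le_mul_of_nonneg_right h3 (norm_nonneg _)
  -- Claim 1 : linear growth of Y
  set B : ℝ := ‖Y' R‖ with hBdef
  have hB : 0 ≤ B := norm_nonneg _
  set A : ℝ := 2 * (‖Y R‖ + B) + 1 with hAdef
  have hA : 0 < A := by positivity
  have claim1 : ∀ T, R ≤ T → ‖Y T‖ ≤ A * T := by
    intro T hT
    have hsubT : Icc R T ⊆ Ici r₀ := fun x hx => le_trans hRr₀ hx.1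
    have hφc : ContinuousOn (fun r => ‖Y r‖ / r) (Icc R T) :=
      ((hYc.mono hsubT).norm).div continuousOn_id
        (fun x hx => ne_of_gt (lt_of_lt_of_le hRpos hx.1))
    obtain ⟨rs, hrs, hmax'⟩ := isCompact_Icc.exists_isMaxOn (nonempty_Icc.2 hT) hφc
    have hmax : ∀ u ∈ Icc R T, ‖Y u‖ / u ≤ ‖Y rs‖ / rs := fun u hu => hmax' hu
    set K : ℝ := ‖Y rs‖ / rs with hKdef
    have hrs0 : (0:ℝ) < rs := lt_of_lt_of_le hRpos hrs.1
    have hKnn : 0 ≤ K := div_nonneg (norm_nonneg _) hrs0.le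
    have hYleK : ∀ u ∈ Icc R T, ‖Y u‖ ≤ K * u := by
      intro u hu
      have hu0 : (0:ℝ) < u := lt_of_lt_of_le hRpos hu.1
      have h1 := hmax u hu
      calc ‖Y u‖ = (‖Y u‖ / u) * u := by field_simp
        _ ≤ K * u := mul_le_mul_of_nonneg_right h1 hu0.le
    -- bound Y' on [R, rs]
    have hY'bd : ∀ s ∈ Icc R rs, ‖Y' s‖ ≤ B + K / 2 := by
      intro s hs
      have hs0 : (0:ℝ) < s := lt_of_lt_of_le hRpos hs.1
      have hIccsub : Icc R s ⊆ Ici r₀ := fun x hx => le_trans hRr₀ hx.1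
      have h1 : Y' s = Y' R + ∫ u in R..s, Y'' u := ftc Y' Y'' hY'' hY''c R s hRr₀ hs.1
      have int1 : IntervalIntegrable (fun u => ‖Y'' u‖) MeasureTheory.volume R s := by
        refine ContinuousOn.intervalIntegrable ?_
        rw [uIcc_of_le hs.1]; exact (hY''c.mono hIccsub).norm
      have int2 : IntervalIntegrable (fun u : ℝ => c1 * K * u ^ (1 - ν))
          MeasureTheory.volume R s := by
        refine ContinuousOn.intervalIntegrable ?_
        rw [uIcc_of_le hs.1]
        exact continuousOn_const.mul (continuousOn_id.rpow_const
          (fun x hx => Or.inl (ne_of_gt (lt_of_lt_of_le hRpos hx.1))))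
      have h2 : ‖∫ u in R..s, Y'' u‖ ≤ ∫ u in R..s, c1 * K * u ^ (1 - ν) := by
        refine (intervalIntegral.norm_integral_le_integral_norm hs.1).trans ?_
        refine intervalIntegral.integral_mono_on hs.1 int1 int2 ?_
        intro u hu
        have hu0 : (0:ℝ) < u := lt_of_lt_of_le hRpos hu.1
        have huT : u ∈ Icc R T := ⟨hu.1, le_trans hu.2 (le_trans hs.2 hrs.2)⟩
        calc ‖Y'' u‖ ≤ c1 * u ^ (-ν) * ‖Y u‖ := hHY u hu.1
          _ ≤ c1 * u ^ (-ν) * (K * u) := by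
              refine mul_le_mul_of_nonneg_left (hYleK u huT) ?_
              positivity
          _ = c1 * K * u ^ (1 - ν) := by
              rw [show (1 - ν : ℝ) = 1 + (-ν) by ring, Real.rpow_add hu0, Real.rpow_one]
              ring
      have h3 : ∫ u in R..s, (u:ℝ) ^ (1 - ν) ≤ R ^ (2 - ν) / (ν - 2) := by
        rw [integral_rpow (Or.inr ⟨by intro hcon; rw [show (1:ℝ) - ν = -1 ↔ ν = 2 by constructor <;> intro h <;> linarith] at hcon; linarith,
          by rw [uIcc_of_le hs.1]; rintro ⟨h0, -⟩; linarith⟩)]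
        have hs2 : (0:ℝ) ≤ s ^ (1 - ν + 1) := Real.rpow_nonneg hs0.le _
        have e1 : (s ^ (1 - ν + 1) - R ^ (1 - ν + 1)) / (1 - ν + 1)
            = (R ^ (1 - ν + 1) - s ^ (1 - ν + 1)) / (ν - 2) := by
          have hne : (1 - ν + 1 : ℝ) ≠ 0 := by intro hcon; nlinarith
          have hne2 : (ν - 2 : ℝ) ≠ 0 := by intro hcon; nlinarith
          field_simp
          ring
        rw [e1, show (1 - ν + 1 : ℝ) = 2 - ν by ring]
        have hs2' : (0:ℝ) ≤ s ^ (2 - ν) := Real.rpow_nonneg hs0.le _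
        have hpos : (0:ℝ) < ν - 2 := by linarith
        gcongr
        linarith
      have h4 : ∫ u in R..s, c1 * K * u ^ (1 - ν) = c1 * K * ∫ u in R..s, (u:ℝ) ^ (1 - ν) := by
        rw [intervalIntegral.integral_const_mul]
      have h5 : c1 * K * (R ^ (2 - ν) / (ν - 2)) ≤ K / 2 := by
        rw [show c1 * K * (R ^ (2 - ν) / (ν - 2)) = (K * (c1 * R ^ (2 - ν))) / (ν - 2) by ring]
        rw [div_le_iff₀ (by linarith : (0:ℝ) < ν - 2)]
        nlinarith [mul_le_mul_of_nonneg_left hsmall hKnn]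
      have h6 : ‖∫ u in R..s, Y'' u‖ ≤ K / 2 := by
        refine h2.trans ?_
        rw [h4]
        exact le_trans (mul_le_mul_of_nonneg_left h3 (mul_nonneg hc1.le hKnn)) h5
      calc ‖Y' s‖ = ‖Y' R + ∫ u in R..s, Y'' u‖ := by rw [← h1]
        _ ≤ ‖Y' R‖ + ‖∫ u in R..s, Y'' u‖ := norm_add_le _ _
        _ ≤ B + K / 2 := by rw [hBdef]; linarith
    -- bound Y at rs
    have h7 : Y rs = Y R + ∫ s in R..rs, Y' s := ftc Y Y' hY' hY'c R rs hRr₀ hrs.1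
    have int3 : IntervalIntegrable (fun s => ‖Y' s‖) MeasureTheory.volume R rs := by
      refine ContinuousOn.intervalIntegrable ?_
      rw [uIcc_of_le hrs.1]
      exact (hY'c.mono (fun x hx => le_trans hRr₀ hx.1)).norm
    have int4 : IntervalIntegrable (fun _ : ℝ => B + K / 2) MeasureTheory.volume R rs :=
      intervalIntegrable_const
    have h8 : ‖Y rs‖ ≤ ‖Y R‖ + (rs - R) * (B + K / 2) := by
      rw [h7]
      refine le_trans (norm_add_le _ _) ?_
      have h9 := (intervalIntegral.norm_integral_le_integral_norm hrs.1).trans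
        (intervalIntegral.integral_mono_on hrs.1 int3 int4 hY'bd)
      rw [intervalIntegral.integral_const] at h9
      simp only [smul_eq_mul] at h9
      linarith
    have hKrs : K * rs = ‖Y rs‖ := by rw [hKdef]; field_simp
    have h9 : K ≤ ‖Y R‖ + B + K / 2 := by
      have hrs1 : (1:ℝ) ≤ rs := le_trans hR1 hrs.1
      have hBK : (0:ℝ) ≤ B + K / 2 := by linarith
      have h10 : K * rs ≤ (‖Y R‖ + B + K / 2) * rs := by
        calc K * rs = ‖Y rs‖ := hKrs
          _ ≤ ‖Y R‖ + (rs - R) * (B + K / 2) := h8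
          _ ≤ ‖Y R‖ * rs + rs * (B + K / 2) := by
              linarith [mul_nonneg (sub_nonneg.2 hrs1) (norm_nonneg (Y R)),
                mul_nonneg hRpos.le hBK]
          _ = (‖Y R‖ + B + K / 2) * rs := by ring
      exact le_of_mul_le_mul_right h10 hrs0
    have hKA : K ≤ A := by rw [hAdef]; linarith
    calc ‖Y T‖ ≤ K * T := hYleK T (right_mem_Icc.2 hT)
      _ ≤ A * T := mul_le_mul_of_nonneg_right hKA (le_trans hRpos.le hT)
  -- decay of Y''
  have hY''bd : ∀ u, R ≤ u → ‖Y'' u‖ ≤ (c1 * A) * u ^ (1 - ν) := by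
    intro u hu
    have hu0 : (0:ℝ) < u := lt_of_lt_of_le hRpos hu
    calc ‖Y'' u‖ ≤ c1 * u ^ (-ν) * ‖Y u‖ := hHY u hu
      _ ≤ c1 * u ^ (-ν) * (A * u) :=
        mul_le_mul_of_nonneg_left (claim1 u hu) (by positivity)
      _ = (c1 * A) * u ^ (1 - ν) := by
          rw [show (1 - ν : ℝ) = 1 + (-ν) by ring, Real.rpow_add hu0, Real.rpow_one]
          ring
  -- generic integrability helper
  have hint : ∀ (g : ℝ → Matrix (Fin n) (Fin n) ℝ) (p K2 : ℝ), p < -1 →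
      ContinuousOn g (Ici r₀) → (∀ u, R ≤ u → ‖g u‖ ≤ K2 * u ^ p) →
      ∀ r, R ≤ r → MeasureTheory.IntegrableOn g (Ioi r) := by
    intro g p K2 hp hgc hb r hr
    have hr0 : (0:ℝ) < r := lt_of_lt_of_le hRpos hr
    have hg1 : MeasureTheory.IntegrableOn (fun u : ℝ => K2 * u ^ p) (Ioi r) :=
      (integrableOn_Ioi_rpow_of_lt hp hr0).const_mul K2
    refine hg1.mono' ((hgc.mono ?_).aestronglyMeasurable measurableSet_Ioi) ?_
    · exact fun x hx => le_trans (le_trans hRr₀ hr) (le_of_lt hx)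
    · filter_upwards [MeasureTheory.ae_restrict_mem measurableSet_Ioi] with u hu
      exact hb u (le_trans hr (le_of_lt hu))
  -- generic tail bound helper
  have htailbd : ∀ (g : ℝ → Matrix (Fin n) (Fin n) ℝ) (p K2 : ℝ), p < -1 → 0 ≤ K2 →
      ContinuousOn g (Ici r₀) → (∀ u, R ≤ u → ‖g u‖ ≤ K2 * u ^ p) →
      ∀ r, R ≤ r → ‖∫ u in Ioi r, g u‖ ≤ (K2 / (-(p + 1))) * r ^ (p + 1) := by
    intro g p K2 hp hK2 hgc hb r hr
    have hr0 : (0:ℝ) < r := lt_of_lt_of_le hRpos hr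
    have hglb : MeasureTheory.IntegrableOn (fun u : ℝ => K2 * u ^ p) (Ioi r) :=
      (integrableOn_Ioi_rpow_of_lt hp hr0).const_mul K2
    calc ‖∫ u in Ioi r, g u‖ ≤ ∫ u in Ioi r, ‖g u‖ :=
        MeasureTheory.norm_integral_le_integral_norm _
      _ ≤ ∫ u in Ioi r, K2 * u ^ p := by
          refine MeasureTheory.setIntegral_mono_on ((hint g p K2 hp hgc hb r hr).norm)
            hglb measurableSet_Ioi ?_
          intro u hu; exact hb u (le_trans hr (le_of_lt hu))
      _ = K2 * ∫ u in Ioi r, (u:ℝ) ^ p := by rw [MeasureTheory.integral_const_mul]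
      _ = K2 * (-r ^ (p + 1) / (p + 1)) := by rw [integral_Ioi_rpow_of_lt hp hr0]
      _ = (K2 / (-(p + 1))) * r ^ (p + 1) := by
          rw [div_neg, neg_div, mul_neg, neg_mul, neg_inj, div_mul_eq_mul_div,
            mul_div_assoc]
  -- construct F
  have hintY'' : ∀ r, R ≤ r → MeasureTheory.IntegrableOn Y'' (Ioi r) :=
    fun r hr => hint Y'' (1 - ν) (c1 * A) (by linarith) hY''c hY''bd r hr
  set F : Matrix (Fin n) (Fin n) ℝ := Y' R + ∫ u in Ioi R, Y'' u with hFdef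
  have hY'tail : ∀ r, R ≤ r → Y' r - F = -∫ u in Ioi r, Y'' u := by
    intro r hr
    have hsplit : ∫ u in Ioi R, Y'' u = (∫ u in Ioc R r, Y'' u) + ∫ u in Ioi r, Y'' u := by
      rw [← MeasureTheory.setIntegral_union (Ioc_disjoint_Ioi le_rfl) measurableSet_Ioi
        ((hintY'' R le_rfl).mono_set Ioc_subset_Ioi_self) (hintY'' r hr),
        Ioc_union_Ioi_eq_Ioi hr]
    have h1 : Y' r = Y' R + ∫ u in R..r, Y'' u := ftc Y' Y'' hY'' hY''c R r hRr₀ hr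
    rw [h1, hFdef, hsplit, intervalIntegral.integral_of_le hr]
    abel
  -- first big-O
  have hbig1 : (fun r => Y' r - F) =O[atTop] fun r : ℝ => r ^ (-ν + 2) := by
    rw [isBigO_iff]
    refine ⟨(c1 * A) / (ν - 2), ?_⟩
    filter_upwards [eventually_ge_atTop R] with r hr
    have hr0 : (0:ℝ) < r := lt_of_lt_of_le hRpos hr
    have htb := htailbd Y'' (1 - ν) (c1 * A) (by linarith) (by positivity) hY''c hY''bd r hr
    rw [hY'tail r hr, norm_neg, Real.norm_of_nonneg (Real.rpow_nonneg hr0.le _)]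
    calc ‖∫ u in Ioi r, Y'' u‖ ≤ ((c1 * A) / (-(1 - ν + 1))) * r ^ (1 - ν + 1) := htb
      _ = (c1 * A) / (ν - 2) * r ^ (-ν + 2) := by
          rw [show (-(1 - ν + 1) : ℝ) = ν - 2 by ring, show (1 - ν + 1 : ℝ) = -ν + 2 by ring]
  -- construct E
  set G : ℝ → Matrix (Fin n) (Fin n) ℝ := fun r => Y r - r • F with hGdef
  have hG' : ∀ r ∈ Ici r₀, HasDerivWithinAt G (Y' r - F) (Ici r₀) r := by
    intro r hr
    exact (hY' r hr).sub (by simpa using (hasDerivWithinAt_id r (Ici r₀)).smul_const F)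
  have hG'c : ContinuousOn (fun r => Y' r - F) (Ici r₀) := hY'c.sub continuousOn_const
  have hK2nn : (0:ℝ) ≤ (c1 * A) / (ν - 2) := div_nonneg (by positivity) (by linarith)
  have hG'bd : ∀ u, R ≤ u → ‖Y' u - F‖ ≤ ((c1 * A) / (ν - 2)) * u ^ (2 - ν) := by
    intro u hu
    have hu0 : (0:ℝ) < u := lt_of_lt_of_le hRpos hu
    have htb := htailbd Y'' (1 - ν) (c1 * A) (by linarith) (by positivity) hY''c hY''bd u hu
    rw [hY'tail u hu, norm_neg]
    calc ‖∫ v in Ioi u, Y'' v‖ ≤ ((c1 * A) / (-(1 - ν + 1))) * u ^ (1 - ν + 1) := htb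
      _ = ((c1 * A) / (ν - 2)) * u ^ (2 - ν) := by
          rw [show (-(1 - ν + 1) : ℝ) = ν - 2 by ring, show (1 - ν + 1 : ℝ) = 2 - ν by ring]
  have hintG' : ∀ r, R ≤ r → MeasureTheory.IntegrableOn (fun u => Y' u - F) (Ioi r) :=
    fun r hr => hint (fun u => Y' u - F) (2 - ν) ((c1 * A) / (ν - 2)) (by linarith)
      hG'c hG'bd r hr
  set E : Matrix (Fin n) (Fin n) ℝ := G R + ∫ u in Ioi R, (Y' u - F) with hEdef
  have hGtail : ∀ r, R ≤ r → G r - E = -∫ u in Ioi r, (Y' u - F) := by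
    intro r hr
    have hsplit : ∫ u in Ioi R, (Y' u - F)
        = (∫ u in Ioc R r, (Y' u - F)) + ∫ u in Ioi r, (Y' u - F) := by
      rw [← MeasureTheory.setIntegral_union (Ioc_disjoint_Ioi le_rfl) measurableSet_Ioi
        ((hintG' R le_rfl).mono_set Ioc_subset_Ioi_self) (hintG' r hr),
        Ioc_union_Ioi_eq_Ioi hr]
    have h1 : G r = G R + ∫ u in R..r, (Y' u - F) := ftc G (fun u => Y' u - F) hG' hG'c R r hRr₀ hr
    rw [h1, hEdef, hsplit, intervalIntegral.integral_of_le hr]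
    abel
  -- second big-O
  have hbig2 : (fun r => G r - E) =O[atTop] fun r : ℝ => r ^ (-ν + 3) := by
    rw [isBigO_iff]
    refine ⟨((c1 * A) / (ν - 2)) / (ν - 3), ?_⟩
    filter_upwards [eventually_ge_atTop R] with r hr
    have hr0 : (0:ℝ) < r := lt_of_lt_of_le hRpos hr
    have htb := htailbd (fun u => Y' u - F) (2 - ν) ((c1 * A) / (ν - 2)) (by linarith)
      hK2nn hG'c hG'bd r hr
    rw [hGtail r hr, norm_neg, Real.norm_of_nonneg (Real.rpow_nonneg hr0.le _)]
    calc ‖∫ u in Ioi r, (Y' u - F)‖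
        ≤ (((c1 * A) / (ν - 2)) / (-(2 - ν + 1))) * r ^ (2 - ν + 1) := htb
      _ = ((c1 * A) / (ν - 2)) / (ν - 3) * r ^ (-ν + 3) := by
          rw [show (-(2 - ν + 1) : ℝ) = ν - 3 by ring, show (2 - ν + 1 : ℝ) = -ν + 3 by ring]
  refine ⟨F, E, hbig1, ?_⟩
  have hfun : (fun r => Y r - (r • F + E)) = fun r => G r - E := by
    funext r
    rw [hGdef]
    exact sub_add_eq_sub_sub _ _ _
  rw [hfun]
  exact hbig2
end

section
/- Let n ≥ 1, let ν ≥ 4 be a real number, let r₀ > 0, and let H : [r₀, ∞) → Mₙ(ℝ) be continuous with H(r) = O(r^{−ν}) as r → ∞. Let Y : [r₀, ∞) → Mₙ(ℝ) be twice differentiable with Y''(r) = −H(r)·Y(r) for all r ≥ r₀, and let F = lim_{r→∞} Y'(r) (which exists). If F is invertible, then Y(r) is invertible for all sufficiently large r, and the matrix L(r) := Y'(r)·Y(r)⁻¹ satisfies L(r) = (1/r)·I + O(r⁻²) as r → ∞, where I denotes the n×n identity matrix. -/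
/-!
Since `Y'` converges, `Y` grows at most linearly, so `Y'' = -H Y = O(r^(1-ν)) = O(r⁻³)`.
Integrating the tail from `r` to `∞` gives `Y' = F + O(r⁻²)`, and integrating `Y' - F` gives
`Y = r F + O(1)`. Hence `G = r⁻¹ Y = F + O(r⁻¹)` is eventually invertible with `G⁻¹` bounded, and
`Y' Y⁻¹ - r⁻¹ = r⁻¹ (Y' - G) G⁻¹ = r⁻¹ · O(r⁻¹) · O(1)`.
-/

open Filter Asymptotics Set

attribute [local instance] Matrix.normedAddCommGroup Matrix.normedSpace

open Topology

section

variable {E : Type*} [NormedAddCommGroup E] [NormedSpace ℝ E] {f f' : ℝ → E}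

lemma norm_sub_le_of_norm_deriv_le_rpow {a C k : ℝ} (ha : 0 < a) (hk : 0 < k)
    (hf : ∀ t ≥ a, HasDerivAt f (f' t) t) (hf' : ∀ t ≥ a, ‖f' t‖ ≤ C * t ^ (-(k + 1)))
    {r s : ℝ} (hr : a ≤ r) (hrs : r ≤ s) :
    ‖f s - f r‖ ≤ C / k * (r ^ (-k) - s ^ (-k)) := by
  have hpos : ∀ t ∈ Icc r s, 0 < t := fun t ht => ha.trans_le (hr.trans ht.1)
  have hB : ∀ t ∈ Icc r s,
      HasDerivAt (fun t => C / k * (r ^ (-k) - t ^ (-k))) (C * t ^ (-(k + 1))) t := by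
    intro t ht
    refine (((Real.hasDerivAt_rpow_const (p := -k) (Or.inl (hpos t ht).ne')).const_sub
      (r ^ (-k))).const_mul (C / k)).congr_deriv ?_
    rw [neg_sub_left, add_comm]
    field_simp
  refine image_norm_le_of_norm_deriv_right_le_deriv_boundary' (f := fun t => f t - f r)
    (fun t ht => ((hf t (hr.trans ht.1)).continuousAt.sub continuousAt_const).continuousWithinAt)
    (fun t ht => ((hf t (hr.trans ht.1)).sub_const (f r)).hasDerivWithinAt)
    (by simp) (fun t ht => (hB t ht).continuousAt.continuousWithinAt)
    (fun t ht => (hB t (Ico_subset_Icc_self ht)).hasDerivWithinAt)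
    (fun t ht => hf' t (hr.trans ht.1)) (right_mem_Icc.2 hrs)

lemma exists_norm_sub_le_of_deriv_isBigO_rpow {k : ℝ} (hk : 0 < k)
    (hf : ∀ᶠ t in atTop, HasDerivAt f (f' t) t)
    (hf' : f' =O[atTop] fun t => t ^ (-(k + 1))) :
    ∃ C, ∃ a > 0, ∀ r s, a ≤ r → r ≤ s → ‖f s - f r‖ ≤ C * r ^ (-k) := by
  obtain ⟨C, hC⟩ := hf'.bound
  obtain ⟨a, ha⟩ := eventually_atTop.1 ((hf.and hC).and (eventually_gt_atTop 0))
  have ha0 : 0 < a := (ha a le_rfl).2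
  refine ⟨C / k, a, ha0, fun r s hr hrs => ?_⟩
  have hbound : ∀ t ≥ a, ‖f' t‖ ≤ C * t ^ (-(k + 1)) := fun t ht => by
    simpa [Real.norm_of_nonneg (Real.rpow_nonneg (ha t ht).2.le _)] using (ha t ht).1.2
  have hC0 : 0 ≤ C := nonneg_of_mul_nonneg_left ((norm_nonneg _).trans (hbound a le_rfl))
    (Real.rpow_pos_of_pos ha0 _)
  calc ‖f s - f r‖ ≤ C / k * (r ^ (-k) - s ^ (-k)) :=
        norm_sub_le_of_norm_deriv_le_rpow ha0 hk (fun t ht => (ha t ht).1.1) hbound hr hrs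
    _ ≤ C / k * r ^ (-k) := by
        have := Real.rpow_nonneg (ha0.le.trans (hr.trans hrs)) (-k)
        gcongr
        linarith

lemma isBigO_sub_of_tendsto_of_deriv_isBigO_rpow {k : ℝ} {l : E} (hk : 0 < k)
    (hf : ∀ᶠ t in atTop, HasDerivAt f (f' t) t)
    (hf' : f' =O[atTop] fun t => t ^ (-(k + 1))) (hl : Tendsto f atTop (𝓝 l)) :
    (fun t => f t - l) =O[atTop] fun t => t ^ (-k) := by
  obtain ⟨C, a, ha, hC⟩ := exists_norm_sub_le_of_deriv_isBigO_rpow hk hf hf'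
  refine IsBigO.of_bound C ?_
  filter_upwards [eventually_ge_atTop a] with r hr
  rw [Real.norm_of_nonneg (Real.rpow_nonneg (ha.le.trans hr) _), ← norm_neg, neg_sub]
  exact le_of_tendsto ((hl.sub_const (f r)).norm)
    ((eventually_ge_atTop r).mono fun s hs => hC r s hr hs)

lemma isBigO_one_of_deriv_isBigO_rpow {k : ℝ} (hk : 0 < k)
    (hf : ∀ᶠ t in atTop, HasDerivAt f (f' t) t)
    (hf' : f' =O[atTop] fun t => t ^ (-(k + 1))) :
    f =O[atTop] fun _ => (1 : ℝ) := by
  obtain ⟨C, a, -, hC⟩ := exists_norm_sub_le_of_deriv_isBigO_rpow hk hf hf'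
  refine IsBigO.of_bound (‖f a‖ + C * a ^ (-k)) ?_
  filter_upwards [eventually_ge_atTop a] with s hs
  rw [norm_one, mul_one]
  calc ‖f s‖ ≤ ‖f a‖ + ‖f s - f a‖ := norm_le_insert' _ _
    _ ≤ ‖f a‖ + C * a ^ (-k) := by gcongr; exact hC a s le_rfl hs

lemma isBigO_id_of_deriv_isBigO_one (hf : ∀ᶠ t in atTop, HasDerivAt f (f' t) t)
    (hf' : f' =O[atTop] fun _ => (1 : ℝ)) :
    f =O[atTop] id := by
  obtain ⟨C, hC⟩ := hf'.bound
  obtain ⟨a, ha⟩ := eventually_atTop.1 ((hf.and hC).and (eventually_ge_atTop 1))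
  have hmvt : ∀ t ≥ a, ‖f t - f a‖ ≤ C * ‖t - a‖ := fun t ht =>
    (convex_Ici a).norm_image_sub_le_of_norm_hasDerivWithin_le
      (fun x hx => (ha x hx).1.1.hasDerivWithinAt) (fun x hx => by simpa using (ha x hx).1.2)
      self_mem_Ici ht
  refine IsBigO.of_bound (‖f a‖ + |C|) ?_
  filter_upwards [eventually_ge_atTop a] with t ht
  have ha1 : 1 ≤ a := (ha a le_rfl).2
  rw [id, Real.norm_of_nonneg (by linarith)]
  calc ‖f t‖ ≤ ‖f a‖ + ‖f t - f a‖ := norm_le_insert' _ _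
    _ ≤ ‖f a‖ + |C| * (t - a) := by
        grw [hmvt t ht, Real.norm_of_nonneg (sub_nonneg.2 ht), le_abs_self C]
    _ ≤ (‖f a‖ + |C|) * t := by nlinarith [norm_nonneg (f a), abs_nonneg C]

lemma eventually_hasDerivAt_of_hasDerivWithinAt_Ici {a : ℝ}
    (hf : ∀ r ∈ Ici a, HasDerivWithinAt f (f' r) (Ici a) r) :
    ∀ᶠ r in atTop, HasDerivAt f (f' r) r := by
  filter_upwards [eventually_gt_atTop a] with r hr
  exact (hf r hr.le).hasDerivAt (Ici_mem_nhds hr)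

end

lemma isBigO_rpow_rpow_atTop_of_le {a b : ℝ} (h : a ≤ b) :
    (fun t : ℝ => t ^ a) =O[atTop] fun t => t ^ b := by
  refine IsBigO.of_bound 1 ?_
  filter_upwards [eventually_ge_atTop 1] with t ht
  rw [one_mul, Real.norm_of_nonneg (by positivity), Real.norm_of_nonneg (by positivity)]
  exact Real.rpow_le_rpow_of_exponent_le ht h

lemma isBigO_rpow_mul_self_rpow_atTop {a b : ℝ} (h : a + 1 ≤ b) :
    (fun t : ℝ => t ^ a * t) =O[atTop] fun t => t ^ b := by
  refine (isBigO_rpow_rpow_atTop_of_le h).congr' ?_ EventuallyEq.rfl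
  filter_upwards [eventually_gt_atTop 0] with t ht
  exact Real.rpow_add_one ht.ne' a

namespace Matrix

variable {α m 𝕜 : Type*} [Fintype m] [NontriviallyNormedField 𝕜] {l : Filter α}

lemma isBigO_mul [CompleteSpace 𝕜] {A B : α → Matrix m m 𝕜} {f g : α → ℝ}
    (hA : A =O[l] f) (hB : B =O[l] g) :
    (fun x => A x * B x) =O[l] fun x => f x * g x :=
  let μ : Matrix m m 𝕜 →L[𝕜] Matrix m m 𝕜 →L[𝕜] Matrix m m 𝕜 :=
    LinearMap.toContinuousLinearMap
      (LinearMap.toContinuousLinearMap.toLinearMap ∘ₗ LinearMap.mul 𝕜 _)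
  μ.isBoundedBilinearMap.isBigO_comp.trans (hA.norm_left.mul hB.norm_left)

variable [DecidableEq m] {G : α → Matrix m m 𝕜} {F : Matrix m m 𝕜}

lemma eventually_isUnit_of_tendsto (hG : Tendsto G l (𝓝 F)) (hF : IsUnit F) :
    ∀ᶠ x in l, IsUnit (G x) := by
  have hdet : Tendsto (fun x => (G x).det) l (𝓝 F.det) :=
    (continuous_id.matrix_det.tendsto F).comp hG
  filter_upwards [hdet.eventually_ne ((isUnit_iff_isUnit_det F).1 hF).ne_zero] with x hx
  exact (isUnit_iff_isUnit_det _).2 hx.isUnit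

lemma tendsto_inv_of_tendsto (hG : Tendsto G l (𝓝 F)) (hF : IsUnit F) :
    Tendsto (fun x => (G x)⁻¹) l (𝓝 F⁻¹) := by
  refine (continuousAt_matrix_inv F ?_).tendsto.comp hG
  rw [Ring.inverse_eq_inv']
  exact continuousAt_inv₀ ((isUnit_iff_isUnit_det F).1 hF).ne_zero

end Matrix

lemma isBigO_mul_inv_sub_inv_smul_one {m : Type*} [Fintype m] [DecidableEq m]
    {Y Y' : ℝ → Matrix m m ℝ} {F : Matrix m m ℝ} (hF : IsUnit F)
    (hY : (fun r => Y r - r • F) =O[atTop] fun _ => (1 : ℝ))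
    (hY' : (fun r => Y' r - F) =O[atTop] fun r => r⁻¹) :
    (∀ᶠ r in atTop, IsUnit (Y r)) ∧
      (fun r => Y' r * (Y r)⁻¹ - r⁻¹ • 1) =O[atTop] fun r => r ^ (-(2 : ℝ)) := by
  set G : ℝ → Matrix m m ℝ := fun r => r⁻¹ • Y r
  have hGF : (fun r => G r - F) =O[atTop] fun r => r⁻¹ := by
    refine ((isBigO_refl (fun r : ℝ => r⁻¹) _).smul hY).congr' ?_ (by simp)
    filter_upwards [eventually_ne_atTop 0] with r hr
    simp [G, smul_sub, smul_smul, hr]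
  have hG : Tendsto G atTop (𝓝 F) :=
    tendsto_sub_nhds_zero_iff.1 (hGF.trans_tendsto tendsto_inv_atTop_zero)
  have hGinv := (Matrix.tendsto_inv_of_tendsto hG hF).isBigO_one ℝ
  have hunit := Matrix.eventually_isUnit_of_tendsto hG hF
  have hright : ∀ᶠ r in atTop, Y r * (r⁻¹ • (G r)⁻¹) = 1 := by
    filter_upwards [hunit] with r hr
    rw [Matrix.mul_smul, ← Matrix.smul_mul,
      Matrix.mul_nonsing_inv _ ((Matrix.isUnit_iff_isUnit_det _).1 hr)]
  refine ⟨hright.mono fun r hr =>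
    (Matrix.isUnit_iff_isUnit_det _).2 (Matrix.isUnit_det_of_right_inverse hr), ?_⟩
  have hsplit : ∀ᶠ r in atTop, r⁻¹ • ((Y' r - F - (G r - F)) * (G r)⁻¹) =
      Y' r * (Y r)⁻¹ - r⁻¹ • (1 : Matrix m m ℝ) := by
    filter_upwards [hright, hunit] with r hr hGr
    rw [Matrix.inv_eq_right_inv hr, sub_sub_sub_cancel_right, sub_mul,
      Matrix.mul_nonsing_inv _ ((Matrix.isUnit_iff_isUnit_det _).1 hGr), smul_sub,
      Matrix.mul_smul]
  refine ((isBigO_refl (fun r : ℝ => r⁻¹) _).smul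
    (Matrix.isBigO_mul (hY'.sub hGF) hGinv)).congr' hsplit ?_
  filter_upwards [eventually_gt_atTop 0] with r hr
  rw [smul_eq_mul, mul_one, Real.rpow_neg hr.le, Real.rpow_two, ← inv_pow, sq]

theorem optical_matrix_asymptotics_of_invertible_limit_general
    (n : ℕ)
    (ν : ℝ) (hν : 4 ≤ ν)
    (r₀ : ℝ)
    (H : ℝ → Matrix (Fin n) (Fin n) ℝ)
    (hH : H =O[atTop] fun r : ℝ => r ^ (-ν))
    (Y Y' Y'' : ℝ → Matrix (Fin n) (Fin n) ℝ)
    (hY' : ∀ r ∈ Ici r₀, HasDerivWithinAt Y (Y' r) (Ici r₀) r)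
    (hY'' : ∀ r ∈ Ici r₀, HasDerivWithinAt Y' (Y'' r) (Ici r₀) r)
    (heq : ∀ r ∈ Ici r₀, Y'' r = -(H r * Y r))
    (F : Matrix (Fin n) (Fin n) ℝ)
    (hF : Tendsto Y' atTop (nhds F))
    (hFinv : IsUnit F) :
    (∀ᶠ r : ℝ in atTop, IsUnit (Y r)) ∧
      ((fun r : ℝ => Y' r * (Y r)⁻¹ - r⁻¹ • (1 : Matrix (Fin n) (Fin n) ℝ))
        =O[atTop] fun r : ℝ => r ^ (-(2 : ℝ))) := by
  have hYd := eventually_hasDerivAt_of_hasDerivWithinAt_Ici hY'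
  have hY'd := eventually_hasDerivAt_of_hasDerivWithinAt_Ici hY''
  have hY_lin : Y =O[atTop] id := isBigO_id_of_deriv_isBigO_one hYd (hF.isBigO_one ℝ)
  have hY''_decay : Y'' =O[atTop] fun r => r ^ (-(2 + 1 : ℝ)) := by
    refine (((Matrix.isBigO_mul hH hY_lin).neg_left.trans
      (isBigO_rpow_mul_self_rpow_atTop (by linarith)))).congr' ?_ EventuallyEq.rfl
    filter_upwards [eventually_ge_atTop r₀] with r hr
    exact (heq r hr).symm
  have hY'_sub : (fun r => Y' r - F) =O[atTop] fun r => r ^ (-2 : ℝ) :=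
    isBigO_sub_of_tendsto_of_deriv_isBigO_rpow two_pos hY'd hY''_decay hF
  have hY_sub : (fun r => Y r - r • F) =O[atTop] fun _ => (1 : ℝ) := by
    refine isBigO_one_of_deriv_isBigO_rpow (f' := fun r => Y' r - F) one_pos ?_
      (by convert hY'_sub using 3; norm_num)
    filter_upwards [hYd] with r hr
    exact (hr.sub ((hasDerivAt_id' r).smul_const F)).congr_deriv (by rw [one_smul])
  have hY'_sub_inv : (fun r => Y' r - F) =O[atTop] fun r => r⁻¹ :=
    hY'_sub.trans ((isBigO_rpow_rpow_atTop_of_le (b := -1) (by norm_num)).congr'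
      EventuallyEq.rfl (Eventually.of_forall Real.rpow_neg_one))
  exact isBigO_mul_inv_sub_inv_smul_one hFinv hY_sub hY'_sub_inv

/-- If `Y'' = -H·Y` with `H = O(r^(-ν))`, `ν ≥ 4`, and the limit
`F = lim_{r→∞} Y'(r)` is invertible, then `Y(r)` is invertible for all
sufficiently large `r` and `L(r) = Y'(r)·Y(r)⁻¹` satisfies
`L(r) = (1/r)·I + O(r⁻²)` as `r → ∞`. -/
theorem optical_matrix_asymptotics_of_invertible_limit
    (n : ℕ) (hn : 1 ≤ n)
    (ν : ℝ) (hν : 4 ≤ ν)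
    (r₀ : ℝ) (hr₀ : 0 < r₀)
    (H : ℝ → Matrix (Fin n) (Fin n) ℝ)
    (hHcont : ContinuousOn H (Ici r₀))
    (hH : H =O[atTop] fun r : ℝ => r ^ (-ν))
    (Y Y' Y'' : ℝ → Matrix (Fin n) (Fin n) ℝ)
    (hY' : ∀ r ∈ Ici r₀, HasDerivWithinAt Y (Y' r) (Ici r₀) r)
    (hY'' : ∀ r ∈ Ici r₀, HasDerivWithinAt Y' (Y'' r) (Ici r₀) r)
    (heq : ∀ r ∈ Ici r₀, Y'' r = -(H r * Y r))
    (F : Matrix (Fin n) (Fin n) ℝ)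
    (hF : Tendsto Y' atTop (nhds F))
    (hFinv : IsUnit F) :
    (∀ᶠ r : ℝ in atTop, IsUnit (Y r)) ∧
      ((fun r : ℝ => Y' r * (Y r)⁻¹ - r⁻¹ • (1 : Matrix (Fin n) (Fin n) ℝ))
        =O[atTop] fun r : ℝ => r ^ (-(2 : ℝ))) :=
  optical_matrix_asymptotics_of_invertible_limit_general n ν hν r₀ H hH Y Y' Y'' hY' hY'' heq F hF
    hFinv
end

section
/- Let n ≥ 1, let ν ≥ 4 be a real number, let r₀ > 0, and let H : [r₀, ∞) → Mₙ(ℝ) be continuous with H(r) = O(r^{−ν}) as r → ∞. Let Y : [r₀, ∞) → Mₙ(ℝ) be twice differentiable with Y''(r) = −H(r)·Y(r) for all r ≥ r₀, suppose Y(r) is invertible for all r ≥ r₀, and set L(r) := Y'(r)·Y(r)⁻¹. If L(r) = (1/r)·I + O(r⁻²) as r → ∞, then the limit F = lim_{r→∞} Y'(r) exists and is an invertible matrix. (Contrapositive: if F is singular, then L cannot have the asymptotic form (1/r)·I + O(r⁻²).) -/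
open Filter Asymptotics Set Matrix

attribute [local instance] Matrix.normedAddCommGroup Matrix.normedSpace

/-- Entrywise-sup norm of a matrix product. -/
private lemma matnorm_mul_le {n : ℕ} (A B : Matrix (Fin n) (Fin n) ℝ) :
    ‖A * B‖ ≤ (n : ℝ) * ‖A‖ * ‖B‖ := by
  rw [Matrix.norm_le_iff (by positivity)]
  intro i j
  rw [Matrix.mul_apply]
  calc ‖∑ k, A i k * B k j‖ ≤ ∑ k, ‖A i k * B k j‖ := norm_sum_le _ _
    _ ≤ ∑ _k : Fin n, ‖A‖ * ‖B‖ := by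
        refine Finset.sum_le_sum fun k _ => ?_
        rw [norm_mul]
        exact mul_le_mul (Matrix.norm_entry_le_entrywise_sup_norm A)
          (Matrix.norm_entry_le_entrywise_sup_norm B) (norm_nonneg _) (norm_nonneg _)
    _ = (n : ℝ) * ‖A‖ * ‖B‖ := by
        simp [Finset.sum_const, Finset.card_univ, mul_assoc]

/-- Sup norm of matrix-vector product. -/
private lemma matnorm_mulVec_le {n : ℕ} (A : Matrix (Fin n) (Fin n) ℝ) (v : Fin n → ℝ) :
    ‖A *ᵥ v‖ ≤ (n : ℝ) * ‖A‖ * ‖v‖ := by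
  rw [pi_norm_le_iff_of_nonneg (by positivity)]
  intro i
  show ‖∑ j, A i j * v j‖ ≤ _
  calc ‖∑ j, A i j * v j‖ ≤ ∑ j, ‖A i j * v j‖ := norm_sum_le _ _
    _ ≤ ∑ _j : Fin n, ‖A‖ * ‖v‖ := by
        refine Finset.sum_le_sum fun j _ => ?_
        rw [norm_mul]
        exact mul_le_mul (Matrix.norm_entry_le_entrywise_sup_norm A)
          (norm_le_pi_norm v j) (norm_nonneg _) (norm_nonneg _)
    _ = (n : ℝ) * ‖A‖ * ‖v‖ := by
        simp [Finset.sum_const, Finset.card_univ, mul_assoc]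

/-- Grönwall inequality with variable coefficient `g` having primitive `G`. -/
private lemma gronwall_rel {EE : Type*} [NormedAddCommGroup EE] [NormedSpace ℝ EE]
    {f f' : ℝ → EE} {g G : ℝ → ℝ} {a b : ℝ} (hab : a ≤ b)
    (hf : ContinuousOn f (Icc a b))
    (hf' : ∀ x ∈ Ico a b, HasDerivWithinAt f (f' x) (Ici x) x)
    (hG : ContinuousOn G (Icc a b))
    (hG' : ∀ x ∈ Ico a b, HasDerivWithinAt G (g x) (Ici x) x)
    (hbound : ∀ x ∈ Ico a b, ‖f' x‖ ≤ g x * ‖f x‖) :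
    ‖f b‖ ≤ ‖f a‖ * Real.exp (G b - G a) := by
  have key : ∀ ε > (0 : ℝ), ‖f b‖ ≤ (‖f a‖ + ε) * Real.exp (G b - G a + ε * (b - a)) := by
    intro ε hε
    set B : ℝ → ℝ := fun x => (‖f a‖ + ε) * Real.exp (G x - G a + ε * (x - a)) with hBdef
    have hBpos : ∀ x, 0 < B x := fun x => mul_pos (by positivity) (Real.exp_pos _)
    have hBderiv : ∀ x ∈ Ico a b, HasDerivWithinAt B ((g x + ε) * B x) (Ici x) x := by
      intro x hx
      have h1 : HasDerivWithinAt (fun y => G y - G a + ε * (y - a)) (g x + ε) (Ici x) x := by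
        have h := ((hG' x hx).sub_const (G a)).add
          (((hasDerivWithinAt_id x (Ici x)).sub_const a).const_mul ε)
        simp only [mul_one] at h
        exact h
      have h2 := (h1.exp).const_mul (‖f a‖ + ε)
      refine h2.congr_deriv ?_
      simp only [hBdef]
      ring
    have hBcont : ContinuousOn B (Icc a b) := by
      apply continuousOn_const.mul
      exact Real.continuous_exp.comp_continuousOn
        (((hG.sub continuousOn_const)).add
          (continuousOn_const.mul (continuousOn_id.sub continuousOn_const)))
    have := image_norm_le_of_norm_deriv_right_lt_deriv_boundary' hf hf'
      (B := B) (B' := fun x => (g x + ε) * B x)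
      (by simp [hBdef]; nlinarith [norm_nonneg (f a)])
      hBcont hBderiv
      (fun x hx heq => by
        calc ‖f' x‖ ≤ g x * ‖f x‖ := hbound x hx
          _ = g x * B x := by rw [heq]
          _ < (g x + ε) * B x := by
              exact mul_lt_mul_of_pos_right (lt_add_of_pos_right _ hε) (hBpos x))
      (right_mem_Icc.2 hab)
    simpa [hBdef] using this
  have hlim : Tendsto (fun ε : ℝ => (‖f a‖ + ε) * Real.exp (G b - G a + ε * (b - a)))
      (nhdsWithin 0 (Ioi 0)) (nhds (‖f a‖ * Real.exp (G b - G a))) := by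
    have hcont : Continuous fun ε : ℝ => (‖f a‖ + ε) * Real.exp (G b - G a + ε * (b - a)) := by
      continuity
    have h0 : Tendsto (fun ε : ℝ => (‖f a‖ + ε) * Real.exp (G b - G a + ε * (b - a)))
        (nhds 0) (nhds (‖f a‖ * Real.exp (G b - G a))) := by
      have := hcont.tendsto 0
      simpa using this
    exact h0.mono_left nhdsWithin_le_nhds
  exact ge_of_tendsto hlim (eventually_nhdsWithin_of_forall fun ε hε => key ε hε)

/-- Absolute-bound version: `‖f'‖ ≤ g = G'` gives `‖f b - f a‖ ≤ G b - G a`. -/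
private lemma gronwall_abs {EE : Type*} [NormedAddCommGroup EE] [NormedSpace ℝ EE]
    {f f' : ℝ → EE} {g G : ℝ → ℝ} {a b : ℝ} (hab : a ≤ b)
    (hf : ContinuousOn f (Icc a b))
    (hf' : ∀ x ∈ Ico a b, HasDerivWithinAt f (f' x) (Ici x) x)
    (hG : ContinuousOn G (Icc a b))
    (hG' : ∀ x ∈ Ico a b, HasDerivWithinAt G (g x) (Ici x) x)
    (hbound : ∀ x ∈ Ico a b, ‖f' x‖ ≤ g x) :
    ‖f b - f a‖ ≤ G b - G a := by
  have := image_norm_le_of_norm_deriv_right_le_deriv_boundary'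
    (f := fun x => f x - f a) (f' := f')
    (hf.sub continuousOn_const)
    (fun x hx => (hf' x hx).sub_const (f a))
    (B := fun x => G x - G a) (B' := g)
    (by simp)
    (hG.sub continuousOn_const)
    (fun x hx => (hG' x hx).sub_const (G a))
    hbound
    (right_mem_Icc.2 hab)
  simpa using this

/-- Converse direction: if `Y'' = -H·Y` with `H = O(r^(-ν))`, `ν ≥ 4`, `Y(r)` is
invertible for all `r ≥ r₀`, and `L(r) = Y'(r)·Y(r)⁻¹` has the asymptotic form
`(1/r)·I + O(r⁻²)`, then `F = lim_{r→∞} Y'(r)` exists and is invertible. -/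
theorem invertible_limit_of_optical_matrix_asymptotics
    (n : ℕ) (hn : 1 ≤ n)
    (ν : ℝ) (hν : 4 ≤ ν)
    (r₀ : ℝ) (hr₀ : 0 < r₀)
    (H : ℝ → Matrix (Fin n) (Fin n) ℝ)
    (hHcont : ContinuousOn H (Ici r₀))
    (hH : H =O[atTop] fun r : ℝ => r ^ (-ν))
    (Y Y' Y'' : ℝ → Matrix (Fin n) (Fin n) ℝ)
    (hY' : ∀ r ∈ Ici r₀, HasDerivWithinAt Y (Y' r) (Ici r₀) r)
    (hY'' : ∀ r ∈ Ici r₀, HasDerivWithinAt Y' (Y'' r) (Ici r₀) r)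
    (heq : ∀ r ∈ Ici r₀, Y'' r = -(H r * Y r))
    (hYinv : ∀ r ∈ Ici r₀, IsUnit (Y r))
    (L : ℝ → Matrix (Fin n) (Fin n) ℝ)
    (hL : ∀ r ∈ Ici r₀, L r = Y' r * (Y r)⁻¹)
    (hLasymp : (fun r : ℝ => L r - r⁻¹ • (1 : Matrix (Fin n) (Fin n) ℝ))
      =O[atTop] fun r : ℝ => r ^ (-(2 : ℝ))) :
    ∃ F : Matrix (Fin n) (Fin n) ℝ, Tendsto Y' atTop (nhds F) ∧ IsUnit F := by
  clear hn hν hHcont hH hY'' heq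
  obtain ⟨c₀, hc₀⟩ := hLasymp.isBigOWith
  obtain ⟨R₁, hR₁⟩ := Filter.eventually_atTop.mp hc₀.bound
  set c : ℝ := max c₀ 0 with hcdef
  have hc : 0 ≤ c := le_max_right _ _
  set R : ℝ := max r₀ R₁ with hRdef
  have hRr₀ : r₀ ≤ R := le_max_left _ _
  have hR0 : (0 : ℝ) < R := lt_of_lt_of_le hr₀ hRr₀
  set K : ℝ := (n : ℝ) * c with hKdef
  have hK0 : 0 ≤ K := by positivity
  set E : ℝ → Matrix (Fin n) (Fin n) ℝ :=
    fun t => L t - t⁻¹ • (1 : Matrix (Fin n) (Fin n) ℝ) with hEdef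
  -- the basic O(t⁻²) bound on E
  have hE : ∀ t, R ≤ t → ‖E t‖ ≤ c * (t⁻¹) ^ 2 := by
    intro t ht
    have ht0 : (0 : ℝ) < t := lt_of_lt_of_le hR0 ht
    have h1 := hR₁ t (le_trans (le_max_right r₀ R₁) ht)
    have h2 : ‖t ^ (-(2 : ℝ))‖ = (t⁻¹) ^ 2 := by
      rw [Real.norm_eq_abs, abs_of_nonneg (Real.rpow_nonneg ht0.le _),
        Real.rpow_neg ht0.le, show ((2 : ℝ) = ((2 : ℕ) : ℝ)) by norm_num,
        Real.rpow_natCast, inv_pow]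
    calc ‖E t‖ ≤ c₀ * ‖t ^ (-(2 : ℝ))‖ := h1
      _ ≤ c * (t⁻¹) ^ 2 := by
          rw [h2]
          exact mul_le_mul_of_nonneg_right (le_max_left _ _) (by positivity)
  -- Y' = L * Y on [r₀, ∞)
  have hYder : ∀ t ∈ Ici r₀, Y' t = L t * Y t := by
    intro t ht
    have hdet : IsUnit (Y t).det := (Matrix.isUnit_iff_isUnit_det _).mp (hYinv t ht)
    rw [hL t ht, Matrix.mul_assoc, Matrix.nonsing_inv_mul _ hdet, Matrix.mul_one]
  set M : ℝ → Matrix (Fin n) (Fin n) ℝ := fun t => t⁻¹ • Y t with hMdef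
  set Md : ℝ → Matrix (Fin n) (Fin n) ℝ :=
    fun t => t⁻¹ • Y' t + (-(t ^ 2)⁻¹) • Y t with hMddef
  have hMder : ∀ t ∈ Ici R, HasDerivWithinAt M (Md t) (Ici R) t := by
    intro t ht
    have ht0 : (t : ℝ) ≠ 0 := (lt_of_lt_of_le hR0 ht).ne'
    have h1 : HasDerivWithinAt (fun y : ℝ => y⁻¹) (-(t ^ 2)⁻¹) (Ici R) t :=
      (hasDerivAt_inv ht0).hasDerivWithinAt
    have h2 : HasDerivWithinAt Y (Y' t) (Ici R) t :=
      (hY' t (le_trans hRr₀ ht)).mono (Ici_subset_Ici.mpr hRr₀)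
    exact h1.smul h2
  have hMcont : ContinuousOn M (Ici R) := fun t ht => (hMder t ht).continuousWithinAt
  -- Md = E * M
  have hMdid : ∀ t, R ≤ t → Md t = E t * M t := by
    intro t ht
    have ht0 : (0 : ℝ) < t := lt_of_lt_of_le hR0 ht
    have hsq : (-(t ^ 2)⁻¹ : ℝ) = -(t⁻¹ * t⁻¹) := by rw [sq, mul_inv]
    simp only [hMddef, hEdef, hMdef, hYder t (le_trans hRr₀ ht)]
    rw [Matrix.sub_mul, Matrix.mul_smul, Matrix.smul_mul, one_mul, smul_smul,
      hsq, neg_smul, sub_eq_add_neg, add_comm]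
  have hMdbound : ∀ t, R ≤ t → ‖Md t‖ ≤ (K * (t⁻¹) ^ 2) * ‖M t‖ := by
    intro t ht
    rw [hMdid t ht]
    calc ‖E t * M t‖ ≤ (n : ℝ) * ‖E t‖ * ‖M t‖ := matnorm_mul_le _ _
      _ ≤ (K * (t⁻¹) ^ 2) * ‖M t‖ := by
          refine mul_le_mul_of_nonneg_right ?_ (norm_nonneg _)
          calc (n : ℝ) * ‖E t‖ ≤ (n : ℝ) * (c * (t⁻¹) ^ 2) :=
                mul_le_mul_of_nonneg_left (hE t ht) (Nat.cast_nonneg n)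
            _ = K * (t⁻¹) ^ 2 := by rw [hKdef]; ring
  -- boundedness of M via Gronwall
  set D : ℝ := ‖M R‖ * Real.exp (K * R⁻¹) with hDdef
  have hD0 : 0 ≤ D := by positivity
  have hMbound : ∀ b, R ≤ b → ‖M b‖ ≤ D := by
    intro b hb
    have hGder : ∀ x ∈ Ico R b, HasDerivWithinAt (fun t : ℝ => -(K * t⁻¹))
        (K * (x⁻¹) ^ 2) (Ici x) x := by
      intro x hx
      have hx0 : (x : ℝ) ≠ 0 := (lt_of_lt_of_le hR0 hx.1).ne'
      have := (((hasDerivAt_inv hx0).const_mul K).neg).hasDerivWithinAt (s := Ici x)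
      refine this.congr_deriv ?_
      rw [inv_pow]; ring
    have hGcont : ContinuousOn (fun t : ℝ => -(K * t⁻¹)) (Icc R b) :=
      (continuousOn_const.mul (continuousOn_id.inv₀
        (fun x hx => (lt_of_lt_of_le hR0 hx.1).ne'))).neg
    have h := gronwall_rel hb (hMcont.mono Icc_subset_Ici_self)
      (fun x hx => (hMder x hx.1).mono (Ici_subset_Ici.mpr hx.1))
      hGcont hGder (fun x hx => hMdbound x hx.1)
    calc ‖M b‖ ≤ ‖M R‖ * Real.exp (-(K * b⁻¹) - -(K * R⁻¹)) := h
      _ ≤ D := by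
          rw [hDdef]
          refine mul_le_mul_of_nonneg_left (Real.exp_le_exp.mpr ?_) (norm_nonneg _)
          have hbp : (0:ℝ) < b := lt_of_lt_of_le hR0 hb
          have : 0 ≤ K * b⁻¹ := mul_nonneg hK0 (inv_nonneg.mpr hbp.le)
          linarith
  -- Cauchy estimate
  have hMdabs : ∀ t, R ≤ t → ‖Md t‖ ≤ K * D * (t⁻¹) ^ 2 := by
    intro t ht
    calc ‖Md t‖ ≤ (K * (t⁻¹) ^ 2) * ‖M t‖ := hMdbound t ht
      _ ≤ (K * (t⁻¹) ^ 2) * D := mul_le_mul_of_nonneg_left (hMbound t ht) (by positivity)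
      _ = K * D * (t⁻¹) ^ 2 := by ring
  have hcau : ∀ a b, R ≤ a → a ≤ b → ‖M b - M a‖ ≤ K * D * a⁻¹ := by
    intro a b ha hab
    have hGder : ∀ x ∈ Ico a b, HasDerivWithinAt (fun t : ℝ => -(K * D * t⁻¹))
        (K * D * (x⁻¹) ^ 2) (Ici x) x := by
      intro x hx
      have hx0 : (x : ℝ) ≠ 0 := (lt_of_lt_of_le hR0 (le_trans ha hx.1)).ne'
      have := (((hasDerivAt_inv hx0).const_mul (K * D)).neg).hasDerivWithinAt (s := Ici x)
      refine this.congr_deriv ?_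
      rw [inv_pow]; ring
    have hGcont : ContinuousOn (fun t : ℝ => -(K * D * t⁻¹)) (Icc a b) :=
      (continuousOn_const.mul (continuousOn_id.inv₀
        (fun x hx => (lt_of_lt_of_le hR0 (le_trans ha hx.1)).ne'))).neg
    have h := gronwall_abs hab
      (hMcont.mono (Icc_subset_Ici_self.trans (Ici_subset_Ici.mpr ha)))
      (fun x hx => (hMder x (le_trans ha hx.1)).mono (Ici_subset_Ici.mpr (le_trans ha hx.1)))
      hGcont hGder (fun x hx => hMdabs x (le_trans ha hx.1))
    have hb0 : (0 : ℝ) ≤ b⁻¹ := inv_nonneg.mpr (le_trans hR0.le (le_trans ha hab))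
    have hKD : (0 : ℝ) ≤ K * D := by positivity
    calc ‖M b - M a‖ ≤ -(K * D * b⁻¹) - -(K * D * a⁻¹) := h
      _ ≤ K * D * a⁻¹ := by nlinarith
  have hCauchy : CauchySeq M := by
    refine Metric.cauchySeq_iff'.mpr ?_
    intro ε hε
    set N : ℝ := max R (K * D / ε) + 1 with hNdef
    have hNR : R ≤ N := by
      have := le_max_left R (K * D / ε)
      simp only [hNdef]; linarith
    refine ⟨N, fun b hb => ?_⟩
    rw [dist_eq_norm]
    refine lt_of_le_of_lt (hcau N b hNR hb) ?_
    have hNpos : 0 < N := lt_of_lt_of_le hR0 hNR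
    have h1 : K * D / ε < N := by
      have := le_max_right R (K * D / ε)
      simp only [hNdef]; linarith
    have h2 : K * D < ε * N := by
      rw [div_lt_iff₀ hε] at h1
      linarith [h1]
    calc K * D * N⁻¹ = K * D / N := by rw [div_eq_mul_inv]
      _ < ε := by rw [div_lt_iff₀ hNpos]; linarith
  obtain ⟨F, hF⟩ := cauchySeq_tendsto_of_complete hCauchy
  -- Y' tends to F
  have hYtoF : Tendsto Y' atTop (nhds F) := by
    have h0 : Tendsto (fun t => Y' t - M t) atTop (nhds 0) := by
      have hgt : Tendsto (fun t : ℝ => K * D * t⁻¹) atTop (nhds 0) := by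
        simpa using tendsto_inv_atTop_zero.const_mul (K * D)
      refine squeeze_zero_norm' ?_ hgt
      · filter_upwards [eventually_ge_atTop R] with t ht
        have ht0 : (0 : ℝ) < t := lt_of_lt_of_le hR0 ht
        have hid : Y' t - M t = E t * Y t := by
          rw [hYder t (le_trans hRr₀ ht)]
          simp only [hEdef, hMdef]
          rw [Matrix.sub_mul, Matrix.smul_mul, one_mul]
        rw [hid]
        have hYnorm : ‖Y t‖ = t * ‖M t‖ := by
          have hYe : Y t = t • M t := by
            simp [hMdef, smul_smul, mul_inv_cancel₀ ht0.ne']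
          rw [hYe, norm_smul, Real.norm_eq_abs, abs_of_pos ht0]
        calc ‖E t * Y t‖ ≤ (n : ℝ) * ‖E t‖ * ‖Y t‖ := matnorm_mul_le _ _
          _ ≤ (n : ℝ) * (c * (t⁻¹) ^ 2) * (t * D) := by
              rw [hYnorm]
              refine mul_le_mul (mul_le_mul_of_nonneg_left (hE t ht) (Nat.cast_nonneg n))
                (mul_le_mul_of_nonneg_left (hMbound t ht) ht0.le) (by positivity) (by positivity)
          _ = K * D * t⁻¹ * (t⁻¹ * t) := by rw [hKdef]; ring
          _ = K * D * t⁻¹ := by rw [inv_mul_cancel₀ ht0.ne', mul_one]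
    have := hF.add h0
    simpa using this
  refine ⟨F, hYtoF, ?_⟩
  by_contra hFnot
  have hdet : F.det = 0 := by
    by_contra hd
    exact hFnot ((Matrix.isUnit_iff_isUnit_det F).mpr (isUnit_iff_ne_zero.mpr hd))
  obtain ⟨v, hv0, hv⟩ := Matrix.exists_mulVec_eq_zero_iff.mpr hdet
  let T : Matrix (Fin n) (Fin n) ℝ →ₗ[ℝ] (Fin n → ℝ) :=
    { toFun := fun A => A *ᵥ v
      map_add' := fun A B => Matrix.add_mulVec A B v
      map_smul' := fun cc A => Matrix.smul_mulVec cc A v }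
  let Tc : Matrix (Fin n) (Fin n) ℝ →L[ℝ] (Fin n → ℝ) := LinearMap.toContinuousLinearMap T
  set u : ℝ → (Fin n → ℝ) := fun t => M t *ᵥ v with hudef
  have hTc : ∀ A, Tc A = A *ᵥ v := fun A => rfl
  have hucont : ContinuousOn u (Ici R) := by
    have := Tc.continuous.comp_continuousOn hMcont
    exact this
  have huder : ∀ t ∈ Ici R, HasDerivWithinAt u (Md t *ᵥ v) (Ici R) t := by
    intro t ht
    have := Tc.hasFDerivAt.comp_hasDerivWithinAt t (hMder t ht)
    exact this
  have hub : ∀ t, R ≤ t → ‖Md t *ᵥ v‖ ≤ (K * (t⁻¹) ^ 2) * ‖u t‖ := by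
    intro t ht
    have hid : Md t *ᵥ v = E t *ᵥ u t := by
      rw [hMdid t ht, hudef, Matrix.mulVec_mulVec]
    rw [hid]
    calc ‖E t *ᵥ u t‖ ≤ (n : ℝ) * ‖E t‖ * ‖u t‖ := matnorm_mulVec_le _ _
      _ ≤ (K * (t⁻¹) ^ 2) * ‖u t‖ := by
          refine mul_le_mul_of_nonneg_right ?_ (norm_nonneg _)
          calc (n : ℝ) * ‖E t‖ ≤ (n : ℝ) * (c * (t⁻¹) ^ 2) :=
                mul_le_mul_of_nonneg_left (hE t ht) (Nat.cast_nonneg n)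
            _ = K * (t⁻¹) ^ 2 := by rw [hKdef]; ring
  have hutend : Tendsto u atTop (nhds 0) := by
    have := (Tc.continuous.tendsto F).comp hF
    have h0 : Tc F = 0 := hv
    rw [h0] at this
    exact this
  -- time-reversed Gronwall
  have hrev : ∀ b, R ≤ b → ‖u R‖ ≤ ‖u b‖ * Real.exp (K * R⁻¹) := by
    intro b hb
    set σ : ℝ → ℝ := fun s => R + b - s with hσdef
    have hσmaps : MapsTo σ (Icc R b) (Icc R b) := by
      intro y hy
      constructor
      · simp only [hσdef]; linarith [hy.2]
      · simp only [hσdef]; linarith [hy.1]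
    have hσat : ∀ x : ℝ, HasDerivAt σ (-1) x := by
      intro x
      simpa using (hasDerivAt_id x).const_sub (R + b)
    have hw' : ∀ x ∈ Ico R b, HasDerivWithinAt (u ∘ σ) (-(Md (σ x) *ᵥ v)) (Ici x) x := by
      intro x hx
      have hσx : σ x ∈ Icc R b := hσmaps ⟨hx.1, hx.2.le⟩
      have h1 : HasDerivWithinAt u (Md (σ x) *ᵥ v) (Icc R b) (σ x) :=
        (huder (σ x) hσx.1).mono Icc_subset_Ici_self
      have h2 : HasDerivWithinAt σ (-1 : ℝ) (Icc R b) x := (hσat x).hasDerivWithinAt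
      have h3 := HasDerivWithinAt.scomp x h1 h2 hσmaps
      have h4 : HasDerivWithinAt (u ∘ σ) (-(Md (σ x) *ᵥ v)) (Icc x b) x := by
        have := h3.mono (Icc_subset_Icc hx.1 le_rfl)
        simpa [neg_one_smul] using this
      rw [← Ici_inter_Iic] at h4
      exact (hasDerivWithinAt_inter (Iic_mem_nhds hx.2)).mp h4
    have hwcont : ContinuousOn (u ∘ σ) (Icc R b) :=
      (hucont.mono Icc_subset_Ici_self).comp
        ((continuous_const.sub continuous_id).continuousOn) hσmaps
    have hG' : ∀ x ∈ Ico R b, HasDerivWithinAt (fun s => K * (σ s)⁻¹)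
        (K * ((σ x)⁻¹) ^ 2) (Ici x) x := by
      intro x hx
      have hσx0 : σ x ≠ 0 := (lt_of_lt_of_le hR0 (hσmaps ⟨hx.1, hx.2.le⟩).1).ne'
      have h1 : HasDerivAt (fun s => (σ s)⁻¹) (-((σ x) ^ 2)⁻¹ * (-1)) x :=
        (hasDerivAt_inv hσx0).comp x (hσat x)
      have h2 := (h1.const_mul K).hasDerivWithinAt (s := Ici x)
      refine h2.congr_deriv ?_
      rw [inv_pow]; ring
    have hGcont : ContinuousOn (fun s => K * (σ s)⁻¹) (Icc R b) := by
      apply continuousOn_const.mul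
      exact ((continuous_const.sub continuous_id).continuousOn).inv₀
        (fun x hx => (lt_of_lt_of_le hR0 (hσmaps hx).1).ne')
    have hbound : ∀ x ∈ Ico R b, ‖-(Md (σ x) *ᵥ v)‖ ≤ (K * ((σ x)⁻¹) ^ 2) * ‖(u ∘ σ) x‖ := by
      intro x hx
      rw [norm_neg]
      exact hub (σ x) (hσmaps ⟨hx.1, hx.2.le⟩).1
    have h := gronwall_rel hb hwcont hw' hGcont hG' hbound
    have hσb : σ b = R := by simp [hσdef]
    have hσR : σ R = b := by simp [hσdef]
    have hb0 : (0 : ℝ) ≤ K * b⁻¹ := by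
      have : (0:ℝ) < b := lt_of_lt_of_le hR0 hb
      positivity
    calc ‖u R‖ = ‖(u ∘ σ) b‖ := by simp [Function.comp, hσb]
      _ ≤ ‖(u ∘ σ) R‖ * Real.exp (K * (σ b)⁻¹ - K * (σ R)⁻¹) := h
      _ = ‖u b‖ * Real.exp (K * R⁻¹ - K * b⁻¹) := by
          simp [Function.comp, hσb, hσR]
      _ ≤ ‖u b‖ * Real.exp (K * R⁻¹) := by
          refine mul_le_mul_of_nonneg_left (Real.exp_le_exp.mpr ?_) (norm_nonneg _)
          linarith
  have huR : ‖u R‖ ≤ 0 := by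
    have hl : Tendsto (fun b => ‖u b‖ * Real.exp (K * R⁻¹)) atTop (nhds 0) := by
      have := hutend.norm.mul_const (Real.exp (K * R⁻¹))
      simpa using this
    exact ge_of_tendsto hl (by filter_upwards [eventually_ge_atTop R] with b hb using hrev b hb)
  have huR0 : M R *ᵥ v = 0 := norm_le_zero_iff.mp huR
  have hMRdet0 : (M R).det = 0 := Matrix.exists_mulVec_eq_zero_iff.mp ⟨v, hv0, huR0⟩
  have hMRdet : (M R).det ≠ 0 := by
    have h1 : (Y R).det ≠ 0 :=
      ((Matrix.isUnit_iff_isUnit_det _).mp (hYinv R hRr₀)).ne_zero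
    have h2 : (M R).det = (R⁻¹) ^ n * (Y R).det := by
      simp [hMdef, Matrix.det_smul, Fintype.card_fin]
    rw [h2]
    exact mul_ne_zero (pow_ne_zero _ (inv_ne_zero hR0.ne')) h1
  exact hMRdet hMRdet0
end

section
/- Let n ≥ 1, let ν ≥ 4 be a real number, and let r₀ > 0. Let H : [r₀, ∞) × ℝ → Mₙ(ℝ) and L : [r₀, ∞) × ℝ → Mₙ(ℝ) be continuously differentiable in (r, x), with L having continuous mixed second partial derivative ∂²L/∂x∂r = ∂²L/∂r∂x, and suppose the Sachs equation ∂L/∂r(r, x) = −L(r, x)² − H(r, x) holds for all r ≥ r₀ and all x. Fix x₀ ∈ ℝ, and assume L(r, x₀) = (1/r)·I + O(r⁻²), H(r, x₀) = O(r^{−ν}) and ∂H/∂x(r, x₀) = O(r^{−ν}) as r → ∞. Then the parameter derivative satisfies ∂L/∂x(r, x₀) = O(r⁻²) as r → ∞. -/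
open Filter Asymptotics Set

attribute [local instance] Matrix.normedAddCommGroup Matrix.normedSpace

lemma mnorm_mul_le {n : ℕ} (A B : Matrix (Fin n) (Fin n) ℝ) :
    ‖A * B‖ ≤ n * ‖A‖ * ‖B‖ := by
  rw [Matrix.norm_le_iff (by positivity)]
  intro i j
  rw [Matrix.mul_apply]
  calc ‖∑ k, A i k * B k j‖ ≤ ∑ k, ‖A i k * B k j‖ := norm_sum_le _ _
    _ ≤ ∑ _k : Fin n, ‖A‖ * ‖B‖ := by
        refine Finset.sum_le_sum fun k _ => ?_
        rw [norm_mul]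
        exact mul_le_mul (Matrix.norm_entry_le_entrywise_sup_norm A)
          (Matrix.norm_entry_le_entrywise_sup_norm B) (norm_nonneg _) (norm_nonneg _)
    _ = n * ‖A‖ * ‖B‖ := by simp [mul_assoc]

noncomputable def mulCLM (n : ℕ) :
    Matrix (Fin n) (Fin n) ℝ →L[ℝ] Matrix (Fin n) (Fin n) ℝ →L[ℝ] Matrix (Fin n) (Fin n) ℝ :=
  LinearMap.mkContinuous₂ (LinearMap.mul ℝ _) n fun A B => mnorm_mul_le A B

@[simp] lemma mulCLM_apply {n : ℕ} (A B : Matrix (Fin n) (Fin n) ℝ) :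
    mulCLM n A B = A * B := rfl

lemma HasDerivAt.matMul {n : ℕ} {f g : ℝ → Matrix (Fin n) (Fin n) ℝ}
    {f' g' : Matrix (Fin n) (Fin n) ℝ} {x : ℝ}
    (hf : HasDerivAt f f' x) (hg : HasDerivAt g g' x) :
    HasDerivAt (fun t => f t * g t) (f x * g' + f' * g x) x := by
  have := ContinuousLinearMap.hasDerivAt_of_bilinear (B := mulCLM n) (fun _ => hf) (fun _ => hg)
  exact this

set_option maxHeartbeats 1000000 in

/-- Parameter derivative of the optical matrix: if `L(r,x)` solves the Sachs
equation `∂L/∂r = -L² - H`, with `H` and `L` continuously differentiable in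
`(r,x)` and `L` having equal continuous mixed second partials, and at `x₀` one
has `L = (1/r)·I + O(r⁻²)`, `H = O(r^(-ν))` and `∂H/∂x = O(r^(-ν))` with `ν ≥ 4`,
then `∂L/∂x(·,x₀) = O(r⁻²)` as `r → ∞`.
Here `Hr = ∂H/∂r`, `Hx = ∂H/∂x`, `Lr = ∂L/∂r`, `Lx = ∂L/∂x` and
`Lxr = ∂²L/∂x∂r = ∂²L/∂r∂x`. -/
theorem sachs_parameter_derivative_decay
    (n : ℕ) (hn : 1 ≤ n)
    (ν : ℝ) (hν : 4 ≤ ν)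
    (r₀ : ℝ) (hr₀ : 0 < r₀)
    (H Hr Hx : ℝ → ℝ → Matrix (Fin n) (Fin n) ℝ)
    (L Lr Lx Lxr : ℝ → ℝ → Matrix (Fin n) (Fin n) ℝ)
    -- `H` is continuously differentiable in `(r, x)`
    (hHr : ∀ r ∈ Ici r₀, ∀ x : ℝ,
      HasDerivWithinAt (fun s => H s x) (Hr r x) (Ici r₀) r)
    (hHx : ∀ r ∈ Ici r₀, ∀ x : ℝ, HasDerivAt (fun t => H r t) (Hx r x) x)
    (hHrCont : ContinuousOn (fun p : ℝ × ℝ => Hr p.1 p.2) (Ici r₀ ×ˢ univ))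
    (hHxCont : ContinuousOn (fun p : ℝ × ℝ => Hx p.1 p.2) (Ici r₀ ×ˢ univ))
    -- `L` is continuously differentiable in `(r, x)`, with partials `Lr`, `Lx`
    (hLr : ∀ r ∈ Ici r₀, ∀ x : ℝ,
      HasDerivWithinAt (fun s => L s x) (Lr r x) (Ici r₀) r)
    (hLx : ∀ r ∈ Ici r₀, ∀ x : ℝ, HasDerivAt (fun t => L r t) (Lx r x) x)
    (hLrCont : ContinuousOn (fun p : ℝ × ℝ => Lr p.1 p.2) (Ici r₀ ×ˢ univ))
    (hLxCont : ContinuousOn (fun p : ℝ × ℝ => Lx p.1 p.2) (Ici r₀ ×ˢ univ))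
    -- the mixed second partial derivatives of `L` exist, coincide and are continuous
    (hmix₁ : ∀ r ∈ Ici r₀, ∀ x : ℝ, HasDerivAt (fun t => Lr r t) (Lxr r x) x)
    (hmix₂ : ∀ r ∈ Ici r₀, ∀ x : ℝ,
      HasDerivWithinAt (fun s => Lx s x) (Lxr r x) (Ici r₀) r)
    (hLxrCont : ContinuousOn (fun p : ℝ × ℝ => Lxr p.1 p.2) (Ici r₀ ×ˢ univ))
    -- the Sachs equation
    (hsachs : ∀ r ∈ Ici r₀, ∀ x : ℝ, Lr r x = -(L r x * L r x) - H r x)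
    (x₀ : ℝ)
    (hLasymp : (fun r : ℝ => L r x₀ - r⁻¹ • (1 : Matrix (Fin n) (Fin n) ℝ))
      =O[atTop] fun r : ℝ => r ^ (-(2 : ℝ)))
    (hH : (fun r => H r x₀) =O[atTop] fun r : ℝ => r ^ (-ν))
    (hHx₀ : (fun r => Hx r x₀) =O[atTop] fun r : ℝ => r ^ (-ν)) :
    (fun r => Lx r x₀) =O[atTop] fun r : ℝ => r ^ (-(2 : ℝ)) := by
  
  -- norm of rpow
  have hrpow2 : ∀ r : ℝ, 0 < r → ‖r ^ (-(2:ℝ))‖ = (r ^ 2)⁻¹ := by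
    intro r hr
    rw [Real.norm_eq_abs, abs_of_pos (Real.rpow_pos_of_pos hr _), Real.rpow_neg hr.le,
      show (2:ℝ) = ((2:ℕ):ℝ) by norm_num, Real.rpow_natCast]
  -- differentiated Sachs equation
  have key : ∀ r, r₀ ≤ r →
      Lxr r x₀ = -(L r x₀ * Lx r x₀ + Lx r x₀ * L r x₀) - Hx r x₀ := by
    intro r hr
    have h1 : HasDerivAt (fun t => Lr r t)
        (-(L r x₀ * Lx r x₀ + Lx r x₀ * L r x₀) - Hx r x₀) x₀ := by
      have hfun : (fun t => Lr r t) = fun t => -(L r t * L r t) - H r t :=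
        funext fun t => hsachs r hr t
      rw [hfun]
      exact (((hLx r hr x₀).matMul (hLx r hr x₀)).neg).sub (hHx r hr x₀)
    exact (hmix₁ r hr x₀).unique h1
  -- constants
  obtain ⟨c₁, hc₁⟩ := hLasymp.bound
  obtain ⟨R₁, hR₁⟩ := eventually_atTop.mp hc₁
  obtain ⟨c₂, hc₂⟩ := hHx₀.bound
  obtain ⟨R₂, hR₂⟩ := eventually_atTop.mp hc₂
  set C₁ : ℝ := max c₁ 0 with hC₁def
  set C₂ : ℝ := max c₂ 0 with hC₂def
  have hC₁0 : 0 ≤ C₁ := le_max_right _ _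
  have hC₂0 : 0 ≤ C₂ := le_max_right _ _
  set K : ℝ := 2 * n * C₁ + C₂ + 1 with hKdef
  have hK0 : 0 < K := by positivity
  set R : ℝ := max (max r₀ 1) (max R₁ R₂) with hRdef
  have hR1 : (1:ℝ) ≤ R := le_trans (le_max_right _ _) (le_max_left _ _)
  have hR0 : (0:ℝ) < R := lt_of_lt_of_le one_pos hR1
  have hRr₀ : r₀ ≤ R := le_trans (le_max_left _ _) (le_max_left _ _)
  set z : ℝ → Matrix (Fin n) (Fin n) ℝ := fun s => Lx s x₀ with hzdef
  set Z : ℝ → Matrix (Fin n) (Fin n) ℝ := fun s => s ^ 2 • z s with hZdef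
  set Cst : ℝ := (‖Z R‖ + 1) * Real.exp (K / R) with hCstdef
  have hCst0 : 0 < Cst := by positivity
  set B : ℝ → ℝ := fun s => Cst * Real.exp (-K * s⁻¹) - 1 with hBdef
  set B' : ℝ → ℝ := fun s => Cst * (Real.exp (-K * s⁻¹) * (K * (s ^ 2)⁻¹)) with hB'def
  -- derivative of Z
  set a : ℝ → Matrix (Fin n) (Fin n) ℝ :=
    fun s => L s x₀ - s⁻¹ • (1 : Matrix (Fin n) (Fin n) ℝ) with hadef
  set Z' : ℝ → Matrix (Fin n) (Fin n) ℝ :=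
    fun s => -(a s * Z s) - Z s * a s - s ^ 2 • Hx s x₀ with hZ'def
  have hZderiv : ∀ x : ℝ, R ≤ x → HasDerivWithinAt Z (Z' x) (Ici x) x := by
    intro x hx
    have hxr₀ : r₀ ≤ x := le_trans hRr₀ hx
    have hx0 : (0:ℝ) < x := lt_of_lt_of_le hR0 hx
    have h1 : HasDerivWithinAt z (Lxr x x₀) (Ici x) x :=
      (hmix₂ x hxr₀ x₀).mono (Ici_subset_Ici.mpr hxr₀)
    have h2 : HasDerivWithinAt (fun s : ℝ => s ^ 2) (2 * x) (Ici x) x := by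
      simpa using (hasDerivAt_pow 2 x).hasDerivWithinAt
    have hZ : HasDerivWithinAt Z (x ^ 2 • Lxr x x₀ + (2 * x) • z x) (Ici x) x :=
      h2.smul h1
    have hkey := key x hxr₀
    have heq : Z' x = x ^ 2 • Lxr x x₀ + (2 * x) • z x := by
      rw [hkey]
      simp only [hZ'def, hadef, hZdef, hzdef]
      have e1 : x⁻¹ * x ^ 2 = x := by field_simp
      have e2 : x ^ 2 * x⁻¹ = x := by field_simp
      simp only [sub_mul, mul_sub, Matrix.mul_smul, Matrix.smul_mul, smul_smul, one_mul,
        mul_one, Matrix.one_mul, Matrix.mul_one, e1, e2]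
      module
    rw [heq]; exact hZ
  -- bound on Z'
  have hbound : ∀ x : ℝ, R ≤ x → ‖Z' x‖ ≤ (K - 1) * (x ^ 2)⁻¹ * (‖Z x‖ + 1) := by
    intro x hx
    have hx0 : (0:ℝ) < x := lt_of_lt_of_le hR0 hx
    have hx1 : (1:ℝ) ≤ x := le_trans hR1 hx
    have hxR₁ : R₁ ≤ x := le_trans (le_trans (le_max_left _ _) (le_max_right _ _)) hx
    have hxR₂ : R₂ ≤ x := le_trans (le_trans (le_max_right _ _) (le_max_right _ _)) hx
    have ha : ‖a x‖ ≤ C₁ * (x ^ 2)⁻¹ := by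
      have := hR₁ x hxR₁
      rw [hrpow2 x hx0] at this
      calc ‖a x‖ ≤ c₁ * (x ^ 2)⁻¹ := this
        _ ≤ C₁ * (x ^ 2)⁻¹ := by
            apply mul_le_mul_of_nonneg_right (le_max_left _ _) (by positivity)
    have hhx : x ^ 2 * ‖Hx x x₀‖ ≤ C₂ * (x ^ 2)⁻¹ := by
      have h1 : ‖Hx x x₀‖ ≤ C₂ * x ^ (-ν) := by
        have := hR₂ x hxR₂
        have hg : ‖x ^ (-ν)‖ = x ^ (-ν) := by
          rw [Real.norm_eq_abs, abs_of_pos (Real.rpow_pos_of_pos hx0 _)]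
        rw [hg] at this
        exact this.trans (mul_le_mul_of_nonneg_right (le_max_left _ _)
          (Real.rpow_pos_of_pos hx0 _).le)
      have h2 : x ^ 2 * (C₂ * x ^ (-ν)) ≤ C₂ * (x ^ 2)⁻¹ := by
        have hx2 : (x:ℝ) ^ 2 = x ^ ((2:ℝ)) := by
          rw [show (2:ℝ) = ((2:ℕ):ℝ) by norm_num, Real.rpow_natCast]
        have h3 : x ^ ((2:ℝ)) * x ^ (-ν) = x ^ ((2:ℝ) + -ν) :=
          (Real.rpow_add hx0 _ _).symm
        have h4 : x ^ ((2:ℝ) + -ν) ≤ x ^ (-(2:ℝ)) :=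
          Real.rpow_le_rpow_of_exponent_le hx1 (by linarith)
        have h5 : x ^ (-(2:ℝ)) = (x ^ 2)⁻¹ := by
          rw [Real.rpow_neg hx0.le, hx2]
        calc x ^ 2 * (C₂ * x ^ (-ν)) = C₂ * (x ^ ((2:ℝ)) * x ^ (-ν)) := by rw [← hx2]; ring
          _ = C₂ * x ^ ((2:ℝ) + -ν) := by rw [h3]
          _ ≤ C₂ * (x ^ 2)⁻¹ := by rw [← h5]; exact mul_le_mul_of_nonneg_left h4 hC₂0
      calc x ^ 2 * ‖Hx x x₀‖ ≤ x ^ 2 * (C₂ * x ^ (-ν)) :=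
            mul_le_mul_of_nonneg_left h1 (by positivity)
        _ ≤ C₂ * (x ^ 2)⁻¹ := h2
    have hZx0 : (0:ℝ) ≤ ‖Z x‖ := norm_nonneg _
    have hmul1 : ‖a x * Z x‖ ≤ n * ‖a x‖ * ‖Z x‖ := mnorm_mul_le _ _
    have hmul2 : ‖Z x * a x‖ ≤ n * ‖Z x‖ * ‖a x‖ := mnorm_mul_le _ _
    have hsmul : ‖(x ^ 2 : ℝ) • Hx x x₀‖ = x ^ 2 * ‖Hx x x₀‖ := by
      rw [norm_smul, Real.norm_eq_abs, abs_of_pos (by positivity)]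
    have step : ‖Z' x‖ ≤ ‖a x * Z x‖ + ‖Z x * a x‖ + ‖(x ^ 2 : ℝ) • Hx x x₀‖ := by
      simp only [hZ'def]
      refine (norm_sub_le _ _).trans ?_
      gcongr
      refine (norm_sub_le _ _).trans ?_
      simp [norm_neg]
    have hn0 : (0:ℝ) ≤ n := Nat.cast_nonneg n
    have hax0 : (0:ℝ) ≤ ‖a x‖ := norm_nonneg _
    have hinv0 : (0:ℝ) ≤ (x ^ 2)⁻¹ := by positivity
    calc ‖Z' x‖ ≤ ‖a x * Z x‖ + ‖Z x * a x‖ + ‖(x ^ 2 : ℝ) • Hx x x₀‖ := step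
      _ ≤ n * ‖a x‖ * ‖Z x‖ + n * ‖Z x‖ * ‖a x‖ + x ^ 2 * ‖Hx x x₀‖ := by
          rw [hsmul]; gcongr
      _ ≤ n * (C₁ * (x ^ 2)⁻¹) * ‖Z x‖ + n * ‖Z x‖ * (C₁ * (x ^ 2)⁻¹)
            + C₂ * (x ^ 2)⁻¹ := by gcongr
      _ = (2 * n * C₁ * (x ^ 2)⁻¹) * ‖Z x‖ + C₂ * (x ^ 2)⁻¹ := by ring
      _ ≤ (K - 1) * (x ^ 2)⁻¹ * ‖Z x‖ + (K - 1) * (x ^ 2)⁻¹ := by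
          have hA : 2 * n * C₁ ≤ K - 1 := by rw [hKdef]; linarith
          have hB2 : C₂ ≤ K - 1 := by
            rw [hKdef]
            have : (0:ℝ) ≤ 2 * n * C₁ := by positivity
            linarith
          exact add_le_add
            (mul_le_mul_of_nonneg_right (mul_le_mul_of_nonneg_right hA hinv0) hZx0)
            (mul_le_mul_of_nonneg_right hB2 hinv0)
      _ = (K - 1) * (x ^ 2)⁻¹ * (‖Z x‖ + 1) := by ring
  -- derivative of B
  have hBderiv : ∀ x : ℝ, 0 < x → HasDerivAt B (B' x) x := by
    intro x hx0
    have h1 : HasDerivAt (fun s : ℝ => -K * s⁻¹) (-K * -(x ^ 2)⁻¹) x :=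
      (hasDerivAt_inv hx0.ne').const_mul (-K)
    have h2 : HasDerivAt (fun s : ℝ => Real.exp (-K * s⁻¹))
        (Real.exp (-K * x⁻¹) * (-K * -(x ^ 2)⁻¹)) x := h1.exp
    have h3 := (h2.const_mul Cst).sub_const 1
    convert h3 using 1
    · rfl
    · rfl
    simp only [hB'def]
    ring
  -- Gronwall-type estimate
  have hzcont : ContinuousOn z (Ici r₀) := by
    have : ContinuousOn (fun s : ℝ => (s, x₀)) (Ici r₀) :=
      (continuous_id.prodMk continuous_const).continuousOn
    exact hLxCont.comp this fun s hs => ⟨hs, mem_univ _⟩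
  have hZbound : ∀ r : ℝ, R ≤ r → ‖Z r‖ ≤ Cst := by
    intro r hr
    have main : ∀ y ∈ Icc R r, ‖Z y‖ ≤ B y := by
      apply image_norm_le_of_norm_deriv_right_lt_deriv_boundary'
        (f' := Z') (B := B) (B' := B')
      · -- continuity of Z on Icc R r
        apply ContinuousOn.smul (f := fun s : ℝ => s ^ 2) (g := z)
        · exact (continuous_pow 2).continuousOn
        · exact (hzcont.mono (fun y hy => le_trans hRr₀ hy.1))
      · intro y hy
        exact hZderiv y hy.1
      · -- ‖Z R‖ ≤ B R
        have : B R = ‖Z R‖ := by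
          simp only [hBdef, hCstdef]
          rw [mul_assoc, ← Real.exp_add]
          have : K / R + -K * R⁻¹ = 0 := by field_simp; ring
          rw [this, Real.exp_zero, mul_one]
          ring
        rw [this]
      · exact fun y hy => ((hBderiv y (lt_of_lt_of_le hR0 hy.1)).continuousAt).continuousWithinAt
      · exact fun y hy => (hBderiv y (lt_of_lt_of_le hR0 hy.1)).hasDerivWithinAt
      · intro y hy heq
        have hy0 : (0:ℝ) < y := lt_of_lt_of_le hR0 hy.1
        have hb := hbound y hy.1
        have hBy : B y + 1 = Cst * Real.exp (-K * y⁻¹) := by simp [hBdef]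
        have hB'y : B' y = K * (y ^ 2)⁻¹ * (B y + 1) := by
          rw [hBy]; simp only [hB'def]; ring
        rw [hB'y, ← heq]
        have h1 : (0:ℝ) < ‖Z y‖ + 1 := by positivity
        have h2 : (0:ℝ) < (y ^ 2)⁻¹ := by positivity
        calc ‖Z' y‖ ≤ (K - 1) * (y ^ 2)⁻¹ * (‖Z y‖ + 1) := hb
          _ < K * (y ^ 2)⁻¹ * (‖Z y‖ + 1) := by nlinarith
    have h := main r ⟨hr, le_refl r⟩
    have hB_le : B r ≤ Cst := by
      have hexp : Real.exp (-K * r⁻¹) ≤ 1 := by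
        apply Real.exp_le_one_iff.mpr
        have : (0:ℝ) < r := lt_of_lt_of_le hR0 hr
        have : (0:ℝ) ≤ K * r⁻¹ := by positivity
        linarith
      simp only [hBdef]
      nlinarith
    linarith
  -- conclusion
  rw [isBigO_iff]
  refine ⟨Cst, ?_⟩
  filter_upwards [eventually_ge_atTop R] with r hr
  have hr0 : (0:ℝ) < r := lt_of_lt_of_le hR0 hr
  have hZr : ‖Z r‖ = r ^ 2 * ‖Lx r x₀‖ := by
    simp only [hZdef, hzdef]
    rw [norm_smul, Real.norm_eq_abs, abs_of_pos (by positivity)]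
  have := hZbound r hr
  rw [hZr] at this
  rw [hrpow2 r hr0]
  rw [show Cst * (r ^ 2)⁻¹ = Cst / r ^ 2 by ring, le_div_iff₀ (by positivity)]
  linarith [mul_comm (r ^ 2) ‖Lx r x₀‖]
end
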